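/- arXiv:2112.01233 — 9 statements merged into one kernel-verified Lean document; each statement's English description precedes it below -/
import Mathlib

section
/- For c : ℕ → ℂ with c_0 = 0, one has ∑_{n=1}^∞ |c_n|²/n² ≤ 4 ∑_{n=0}^∞ |c_{n+1} − c_n|². -/
open Finset

/-- Discrete Hardy-type inequality: if `c : ℕ → ℂ` with `c 0 = 0` and the differences are
square-summable, then `∑_{n ≥ 1} |c n|² / n² ≤ 4 ∑_{n ≥ 0} |c (n+1) - c n|²`. -/
theorem hardy_diff_inequality
    (c : ℕ → ℂ) (hc0 : c 0 = 0)
    (hsum : Summable fun n : ℕ => ‖c (n + 1) - c n‖ ^ 2) :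
    (∑' n : ℕ, ‖c (n + 1)‖ ^ 2 / ((n : ℝ) + 1) ^ 2) ≤
      4 * ∑' n : ℕ, ‖c (n + 1) - c n‖ ^ 2 := by
  set a : ℕ → ℝ := fun n => ‖c (n + 1) - c n‖ with ha
  have ha0 : ∀ n, 0 ≤ a n := fun n => norm_nonneg _
  set A : ℕ → ℝ := fun n => ∑ k ∈ range (n + 1), a k with hA
  have hA0 : ∀ n, 0 ≤ A n := fun n => Finset.sum_nonneg fun k _ => ha0 k
  set b : ℕ → ℝ := fun n => A n / (n + 1) with hb
  have hb0 : ∀ n, 0 ≤ b n := fun n => div_nonneg (hA0 n) (by positivity)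
  have hbA : ∀ n : ℕ, ((n : ℝ) + 1) * b n = A n := by
    intro n
    have : ((n : ℝ) + 1) ≠ 0 := by positivity
    simp only [hb]; field_simp
  -- ‖c (n+1)‖ ≤ A n
  have hcA : ∀ n : ℕ, ‖c (n + 1)‖ ≤ A n := by
    intro n
    have htel : c (n + 1) = ∑ k ∈ range (n + 1), (c (k + 1) - c k) := by
      rw [Finset.sum_range_sub, hc0, sub_zero]
    calc ‖c (n + 1)‖ = ‖∑ k ∈ range (n + 1), (c (k + 1) - c k)‖ := by rw [← htel]
      _ ≤ ∑ k ∈ range (n + 1), ‖c (k + 1) - c k‖ := norm_sum_le _ _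
      _ = A n := rfl
  -- key pointwise inequality
  have key : ∀ n : ℕ, b n ^ 2 - 2 * (a n * b n) ≤
      (n : ℝ) * b (n - 1) ^ 2 - ((n : ℝ) + 1) * b n ^ 2 := by
    intro n
    cases n with
    | zero =>
      have hb00 : b 0 = a 0 := by simp [hb, hA]
      simp only [Nat.cast_zero, Nat.zero_sub]
      rw [hb00]
      nlinarith [sq_nonneg (a 0)]
    | succ m =>
      have hA1 : A (m + 1) = A m + a (m + 1) := Finset.sum_range_succ _ _
      have e1 : ((m : ℝ) + 1 + 1) * b (m + 1) = A (m + 1) := by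
        have := hbA (m + 1); push_cast at this ⊢; linarith
      have e2 : ((m : ℝ) + 1) * b m = A m := hbA m
      have han : a (m + 1) = ((m : ℝ) + 2) * b (m + 1) - ((m : ℝ) + 1) * b m := by
        rw [hA1] at e1; linarith
      have hsub : (m + 1 : ℕ) - 1 = m := rfl
      rw [hsub]
      push_cast
      rw [han]
      nlinarith [mul_nonneg (by positivity : (0:ℝ) ≤ (m : ℝ) + 1)
        (sq_nonneg (b m - b (m + 1)))]
  -- finite Hardy inequality on partial sums of b²
  set T : ℝ := ∑' n : ℕ, ‖c (n + 1) - c n‖ ^ 2 with hT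
  have hT0 : 0 ≤ T := tsum_nonneg fun n => sq_nonneg _
  have hfin : ∀ N : ℕ, ∑ n ∈ range N, b n ^ 2 ≤ 4 * T := by
    intro N
    set S : ℝ := ∑ n ∈ range N, b n ^ 2 with hS
    set P : ℝ := ∑ n ∈ range N, a n * b n with hP
    have hS0 : 0 ≤ S := Finset.sum_nonneg fun n _ => sq_nonneg _
    have hP0 : 0 ≤ P := Finset.sum_nonneg fun n _ => mul_nonneg (ha0 n) (hb0 n)
    -- S ≤ 2 P via telescoping
    have hS2P : S ≤ 2 * P := by
      have h1 : ∑ n ∈ range N, (b n ^ 2 - 2 * (a n * b n)) ≤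
          ∑ n ∈ range N, ((n : ℝ) * b (n - 1) ^ 2 - ((n : ℝ) + 1) * b n ^ 2) :=
        Finset.sum_le_sum fun n _ => key n
      have h2 : ∑ n ∈ range N, ((n : ℝ) * b (n - 1) ^ 2 - ((n : ℝ) + 1) * b n ^ 2) =
          (fun m : ℕ => (m : ℝ) * b (m - 1) ^ 2) 0 -
          (fun m : ℕ => (m : ℝ) * b (m - 1) ^ 2) N := by
        rw [← Finset.sum_range_sub' (fun m : ℕ => (m : ℝ) * b (m - 1) ^ 2) N]
        apply Finset.sum_congr rfl
        intro n _
        simp [Nat.succ_sub_one]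
      have h3 : (fun m : ℕ => (m : ℝ) * b (m - 1) ^ 2) 0 -
          (fun m : ℕ => (m : ℝ) * b (m - 1) ^ 2) N ≤ 0 := by
        simp only
        have : 0 ≤ (N : ℝ) * b (N - 1) ^ 2 := by positivity
        push_cast
        linarith
      have h4 : ∑ n ∈ range N, (b n ^ 2 - 2 * (a n * b n)) = S - 2 * P := by
        rw [Finset.sum_sub_distrib, ← Finset.mul_sum]
      rw [h4, h2] at h1
      linarith [h1, h3]
    -- Cauchy-Schwarz : P² ≤ (∑ a²) * S
    have hCS : P ^ 2 ≤ (∑ n ∈ range N, a n ^ 2) * S :=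
      Finset.sum_mul_sq_le_sq_mul_sq (range N) a b
    have haT : ∑ n ∈ range N, a n ^ 2 ≤ T :=
      Summable.sum_le_tsum _ (fun n _ => sq_nonneg _) hsum
    have hCS' : P ^ 2 ≤ T * S := hCS.trans (mul_le_mul_of_nonneg_right haT hS0)
    rcases eq_or_lt_of_le hS0 with h | h
    · linarith
    · nlinarith
  -- conclude
  refine Real.tsum_le_of_sum_range_le (fun n => by positivity) fun N => ?_
  refine le_trans (Finset.sum_le_sum fun n _ => ?_) (hfin N)
  have h1 : ‖c (n + 1)‖ ^ 2 / ((n : ℝ) + 1) ^ 2 = (‖c (n + 1)‖ / ((n : ℝ) + 1)) ^ 2 := by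
    rw [div_pow]
  rw [h1]
  have h2 : ‖c (n + 1)‖ / ((n : ℝ) + 1) ≤ b n :=
    div_le_div_of_nonneg_right (hcA n) (by positivity) |>.trans_eq rfl
  exact pow_le_pow_left₀ (by positivity) h2 2
end

section
/- Hardy's inequality for p = 2: for any sequence a : ℕ+ → ℝ≥0, ∑_{n=1}^∞ ((1/n) ∑_{k=1}^n a_k)² ≤ 4 ∑_{n=1}^∞ a_n². -/
/-!
Write `b n` for the mean of `a 0, …, a n`, so that `a (n + 1) = (n + 2) b (n + 1) - (n + 1) b n`.
Then `b (n+1)² - 2 a (n+1) b (n+1) ≤ (n+1) b n² - (n+2) b (n+1)²` by AM-GM on the cross term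
`2 (n+1) b n b (n+1)`, and the right-hand side telescopes: `∑ b² ≤ 2 ∑ a b` over every initial
segment. Cauchy–Schwarz turns this into `(∑ b²)² ≤ 4 (∑ a²)(∑ b²)`, i.e. `∑ b² ≤ 4 ∑ a²`.
-/

open Finset

noncomputable def cesaroMean (a : ℕ → ℝ) (n : ℕ) : ℝ :=
  (1 / ((n : ℝ) + 1)) * ∑ k ∈ range (n + 1), a k

namespace cesaroMean

variable (a : ℕ → ℝ)

theorem succ_mul (n : ℕ) : ((n : ℝ) + 1) * cesaroMean a n = ∑ k ∈ range (n + 1), a k := by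
  rw [cesaroMean]
  field_simp

theorem apply_succ_eq (n : ℕ) :
    a (n + 1) = ((n : ℝ) + 2) * cesaroMean a (n + 1) - ((n : ℝ) + 1) * cesaroMean a n := by
  have h := succ_mul a (n + 1)
  rw [sum_range_succ, ← succ_mul a n] at h
  push_cast at h
  linarith

theorem sq_succ_sub_two_mul_le (n : ℕ) :
    cesaroMean a (n + 1) ^ 2 - 2 * a (n + 1) * cesaroMean a (n + 1) ≤
      ((n : ℝ) + 1) * cesaroMean a n ^ 2 - ((n : ℝ) + 2) * cesaroMean a (n + 1) ^ 2 := by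
  rw [apply_succ_eq a n]
  nlinarith [mul_nonneg (n.cast_add_one_pos (α := ℝ)).le
    (sq_nonneg (cesaroMean a n - cesaroMean a (n + 1)))]

theorem sum_sq_add_le (N : ℕ) :
    ∑ n ∈ range (N + 1), cesaroMean a n ^ 2 + ((N : ℝ) + 1) * cesaroMean a N ^ 2 ≤
      2 * ∑ n ∈ range (N + 1), a n * cesaroMean a n := by
  induction N with
  | zero =>
    simp only [zero_add, range_one, sum_singleton, CharP.cast_eq_zero, cesaroMean]
    nlinarith [sq_nonneg (a 0)]
  | succ N ih =>
    have step := sq_succ_sub_two_mul_le a N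
    rw [sum_range_succ, sum_range_succ (fun n => a n * cesaroMean a n)]
    push_cast
    linarith

theorem sum_sq_le_two_mul_sum_mul (N : ℕ) :
    ∑ n ∈ range N, cesaroMean a n ^ 2 ≤ 2 * ∑ n ∈ range N, a n * cesaroMean a n := by
  cases N with
  | zero => simp
  | succ N =>
    have := sum_sq_add_le a N
    have : 0 ≤ ((N : ℝ) + 1) * cesaroMean a N ^ 2 := by positivity
    linarith

theorem sum_sq_le_four_mul_sum_sq (N : ℕ) :
    ∑ n ∈ range N, cesaroMean a n ^ 2 ≤ 4 * ∑ n ∈ range N, a n ^ 2 := by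
  set S := ∑ n ∈ range N, cesaroMean a n ^ 2
  set T := ∑ n ∈ range N, a n * cesaroMean a n
  have hS : 0 ≤ S := sum_nonneg fun n _ => sq_nonneg _
  have hST : S ≤ 2 * T := sum_sq_le_two_mul_sum_mul a N
  have cauchy_schwarz : T ^ 2 ≤ (∑ n ∈ range N, a n ^ 2) * S := sum_mul_sq_le_sq_mul_sq _ _ _
  rcases hS.eq_or_lt with hS0 | hS0
  · rw [← hS0]
    positivity
  · nlinarith

theorem tsum_sq_le_four_mul_tsum_sq (ha : Summable fun n => a n ^ 2) :
    ∑' n, cesaroMean a n ^ 2 ≤ 4 * ∑' n, a n ^ 2 :=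
  Real.tsum_le_of_sum_range_le (fun n => sq_nonneg _) fun N =>
    (sum_sq_le_four_mul_sum_sq a N).trans <| mul_le_mul_of_nonneg_left
      (ha.sum_le_tsum _ fun n _ => sq_nonneg _) (by norm_num)

end cesaroMean

theorem hardy_inequality_p_two_general
    (a : ℕ → ℝ)
    (hsum : Summable fun n : ℕ => a (n + 1) ^ 2) :
    (∑' n : ℕ, ((1 / ((n : ℝ) + 1)) * ∑ k ∈ Finset.range (n + 1), a (k + 1)) ^ 2) ≤
      4 * ∑' n : ℕ, a (n + 1) ^ 2 :=
  cesaroMean.tsum_sq_le_four_mul_tsum_sq (fun k => a (k + 1)) hsum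

/-- Hardy's inequality for `p = 2`: for a nonnegative sequence `a₁, a₂, …`,
`∑_{n ≥ 1} ((1/n) ∑_{k=1}^n a_k)² ≤ 4 ∑_{n ≥ 1} a_n²`. -/
theorem hardy_inequality_p_two
    (a : ℕ → ℝ) (ha : ∀ n : ℕ, 1 ≤ n → 0 ≤ a n)
    (hsum : Summable fun n : ℕ => a (n + 1) ^ 2) :
    (∑' n : ℕ, ((1 / ((n : ℝ) + 1)) * ∑ k ∈ Finset.range (n + 1), a (k + 1)) ^ 2) ≤
      4 * ∑' n : ℕ, a (n + 1) ^ 2 :=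
  hardy_inequality_p_two_general a hsum
end

section
/- Let T_n(t) = e^{tni}·[[e^{it/n}, n sin(t/n)], [0, e^{−it/n}]] for integers n ≥ 2. Then sup_{n≥2} ‖T_n(t)‖ grows linearly in t: there exist constants 0 < c ≤ C and t₀ ≥ 0 such that c·t ≤ sup_{n≥2} ‖T_n(t)‖ ≤ C·t for all t ≥ t₀. -/
open Complex

/-!
`T_n(t)` is a unimodular scalar times `D + n sin(t/n) E₀₁` with `D` diagonal unitary, so
`n |sin(t/n)| ≤ ‖T_n(t)‖ ≤ 1 + n |sin(t/n)|`. Since `|sin x| ≤ |x|`, the upper bound is at most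
`1 + t` for every `n`; Jordan's inequality `sin x ≥ 2x/π` on `[0, π/2]` makes the lower bound at
least `2t/π` for `n = ⌈t⌉`.
-/

noncomputable def battyT (n : ℕ) (t : ℝ) : Matrix (Fin 2) (Fin 2) ℂ :=
  Complex.exp ((t : ℂ) * n * I) •
    !![Complex.exp (I * t / n), (n : ℂ) * Complex.sin ((t : ℂ) / n);
       0, Complex.exp (-I * t / n)]

noncomputable def opNorm2 (M : Matrix (Fin 2) (Fin 2) ℂ) : ℝ :=
  ‖Matrix.toEuclideanCLM (𝕜 := ℂ) M‖

open scoped Matrix.Norms.L2Operator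

namespace Matrix

variable {𝕜 m n : Type*} [RCLike 𝕜] [Fintype m] [Fintype n] [DecidableEq n]

theorem norm_apply_le_l2_opNorm (A : Matrix m n 𝕜) (i : m) (j : n) : ‖A i j‖ ≤ ‖A‖ := by
  let e : EuclideanSpace 𝕜 n := EuclideanSpace.single j 1
  calc ‖A i j‖ = ‖(EuclideanSpace.equiv m 𝕜).symm (A *ᵥ e.ofLp) i‖ := by
        simp [e, mulVec_single]
    _ ≤ ‖(EuclideanSpace.equiv m 𝕜).symm (A *ᵥ e.ofLp)‖ := PiLp.norm_apply_le _ i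
    _ ≤ ‖A‖ * ‖e‖ := A.l2_opNorm_mulVec e
    _ = ‖A‖ := by simp [e]

theorem l2_opNorm_single [DecidableEq m] (i : m) (j : n) (c : 𝕜) : ‖single i j c‖ = ‖c‖ := by
  refine le_antisymm ?_ (by simpa using norm_apply_le_l2_opNorm (single i j c) i j)
  rw [l2_opNorm_def]
  refine ContinuousLinearMap.opNorm_le_bound _ (norm_nonneg c) fun x => ?_
  have hx : toEuclideanLin (single i j c) x = EuclideanSpace.single i (c * x j) := by
    ext k
    simp [single_mulVec, Function.update_apply]
  calc _ = ‖c * x j‖ := by simp [hx]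
    _ ≤ ‖c‖ * ‖x‖ := by rw [norm_mul]; gcongr; exact PiLp.norm_apply_le x j

end Matrix

open Matrix

theorem mul_abs_sin_div_le {a : ℝ} (ha : 0 ≤ a) (t : ℝ) : a * |Real.sin (t / a)| ≤ |t| := by
  rcases ha.eq_or_lt with rfl | ha
  · simp
  calc a * |Real.sin (t / a)| ≤ a * |t / a| :=
        mul_le_mul_of_nonneg_left Real.abs_sin_le_abs ha.le
    _ = |t| := by rw [abs_div, abs_of_pos ha]; field_simp

theorem two_div_pi_mul_le_mul_sin_div {a t : ℝ} (ha : 0 < a) (ht : 0 ≤ t)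
    (hta : 2 * t ≤ Real.pi * a) : 2 / Real.pi * t ≤ a * Real.sin (t / a) := by
  have hsin := Real.mul_le_sin (x := t / a) (by positivity) (by
    rw [div_le_div_iff₀ ha two_pos]; linarith)
  calc 2 / Real.pi * t = a * (2 / Real.pi * (t / a)) := by field_simp
    _ ≤ a * Real.sin (t / a) := by gcongr

theorem battyT_eq_smul_diagonal_add_single (n : ℕ) (t : ℝ) :
    battyT n t = Complex.exp (t * n * I) •
      (diagonal ![Complex.exp (I * t / n), Complex.exp (-I * t / n)] +
        single 0 1 ((n : ℂ) * Complex.sin (t / n))) := by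
  ext i j
  fin_cases i <;> fin_cases j <;> simp [battyT]

theorem norm_natCast_mul_sin_div (n : ℕ) (t : ℝ) :
    ‖(n : ℂ) * Complex.sin (t / n)‖ = n * |Real.sin (t / n)| := by
  rw [norm_mul, ← ofReal_natCast, ← ofReal_div, ← ofReal_sin, norm_real, norm_real,
    Real.norm_eq_abs, Real.norm_eq_abs, Nat.abs_cast]

theorem norm_exp_mul_natCast_mul_I (t : ℝ) (n : ℕ) : ‖Complex.exp (t * n * I)‖ = 1 := by
  rw [← ofReal_natCast, ← ofReal_mul, norm_exp_ofReal_mul_I]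

theorem opNorm2_battyT_le (n : ℕ) (t : ℝ) :
    opNorm2 (battyT n t) ≤ 1 + n * |Real.sin (t / n)| := by
  have hd : ‖![Complex.exp (I * t / n), Complex.exp (-I * t / n)]‖ ≤ 1 := by
    refine (pi_norm_le_iff_of_nonneg zero_le_one).2 (Fin.forall_fin_two.2 ⟨?_, ?_⟩) <;>
    simp [norm_exp]
  rw [opNorm2, ← cstar_norm_def, battyT_eq_smul_diagonal_add_single, norm_smul,
    norm_exp_mul_natCast_mul_I, one_mul, ← norm_natCast_mul_sin_div,
    ← l2_opNorm_single (0 : Fin 2) (1 : Fin 2)]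
  exact (norm_add_le _ _).trans (by grw [l2_opNorm_diagonal, hd])

theorem mul_abs_sin_le_opNorm2_battyT (n : ℕ) (t : ℝ) :
    n * |Real.sin (t / n)| ≤ opNorm2 (battyT n t) :=
  calc n * |Real.sin (t / n)| = ‖battyT n t 0 1‖ := by
        simp [battyT, ← norm_natCast_mul_sin_div, norm_exp_mul_natCast_mul_I]
    _ ≤ opNorm2 (battyT n t) := norm_apply_le_l2_opNorm _ 0 1

/-- `sup_{n ≥ 2} ‖T_n(t)‖` grows linearly: there are `0 < c ≤ C` and `t₀ ≥ 0` such that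
`c t ≤ sup_{n ≥ 2} ‖T_n(t)‖ ≤ C t` for all `t ≥ t₀`. -/
theorem sup_battyT_norm_linear :
    ∃ c C t₀ : ℝ, 0 < c ∧ c ≤ C ∧ 0 ≤ t₀ ∧ ∀ t : ℝ, t₀ ≤ t →
      c * t ≤ (⨆ n : {m : ℕ // 2 ≤ m}, opNorm2 (battyT n t)) ∧
      (⨆ n : {m : ℕ // 2 ≤ m}, opNorm2 (battyT n t)) ≤ C * t := by
  refine ⟨2 / Real.pi, 2, 2, by positivity, ?_, zero_le_two, fun t ht => ?_⟩
  · exact div_le_self zero_le_two (by linarith [Real.pi_gt_three])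
  have hub (n : {m : ℕ // 2 ≤ m}) : opNorm2 (battyT n t) ≤ 2 * t := by
    linarith [opNorm2_battyT_le n t, mul_abs_sin_div_le (Nat.cast_nonneg n.1) t,
      abs_of_nonneg (by linarith : (0 : ℝ) ≤ t)]
  have : Nonempty {m : ℕ // 2 ≤ m} := ⟨⟨2, le_rfl⟩⟩
  refine ⟨?_, ciSup_le hub⟩
  have hn : 2 ≤ ⌈t⌉₊ := Nat.lt_ceil.2 (by norm_num; linarith)
  calc 2 / Real.pi * t ≤ ⌈t⌉₊ * Real.sin (t / ⌈t⌉₊) :=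
        two_div_pi_mul_le_mul_sin_div (by positivity) (by linarith)
          (by nlinarith [Nat.le_ceil t, Real.pi_gt_three])
    _ ≤ ⌈t⌉₊ * |Real.sin (t / ⌈t⌉₊)| := by gcongr; exact le_abs_self _
    _ ≤ opNorm2 (battyT ⌈t⌉₊ t) := mul_abs_sin_le_opNorm2_battyT _ _
    _ ≤ ⨆ n : {m : ℕ // 2 ≤ m}, opNorm2 (battyT n t) :=
        le_ciSup ⟨2 * t, Set.forall_mem_range.2 hub⟩ (⟨⌈t⌉₊, hn⟩ : {m : ℕ // 2 ≤ m})
end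

section
/- Let A_n = [[ni + i/n, 1], [0, ni − i/n]] for n ≥ 2. Then A_n is invertible, and T_n(t)·A_n^{-1} = (in/(1 − n⁴))·e^{tni}·[[(n²−1)e^{it/n}, (n²−1)n sin(t/n) + i n e^{−it/n}], [0, (n²+1)e^{−it/n}]], where T_n(t) = e^{tA_n}. -/
open Complex

noncomputable def battyA (n : ℕ) : Matrix (Fin 2) (Fin 2) ℂ :=
  !![(n : ℂ) * I + I / n, 1; 0, (n : ℂ) * I - I / n]

/-!
`A_n` is upper triangular with the distinct eigenvalues `λ± = i(n² ± 1)/n`, so it is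
diagonalised by the upper triangular matrix `[[1, 1], [0, λ₋ - λ₊]]`. Hence
`e^{tA_n} = [[e^{tλ₊}, (e^{tλ₊} - e^{tλ₋})/(λ₊ - λ₋)], [0, e^{tλ₋}]]`, while
`A_n⁻¹ = [[1/λ₊, -1/(λ₊λ₋)], [0, 1/λ₋]]` with `λ₊λ₋ = (1 - n⁴)/n²`. Multiplying out and writing
`e^{tλ±} = e^{tni} e^{±it/n}` gives the formula, the `sin (t/n)` coming from `e^{-it/n} - e^{it/n}`.
-/

namespace Matrix

theorem inv_upperTriangular_fin_two {K : Type*} [Field K] {a b : K} (c : K) (ha : a ≠ 0)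
    (hb : b ≠ 0) : (!![a, c; 0, b])⁻¹ = !![a⁻¹, -c / (a * b); 0, b⁻¹] := by
  refine inv_eq_right_inv ?_
  ext i j
  fin_cases i <;> fin_cases j <;> simp <;> field_simp; ring

theorem exp_smul_upperTriangular_fin_two {𝕂 : Type*} [NormedField 𝕂] [NormedAlgebra ℚ 𝕂]
    [CompleteSpace 𝕂] (t : 𝕂) {a b : 𝕂} (c : 𝕂) (hab : a ≠ b) :
    NormedSpace.exp (t • !![a, c; 0, b]) =
      !![NormedSpace.exp (t * a),
          c * (NormedSpace.exp (t * a) - NormedSpace.exp (t * b)) / (a - b);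
        0, NormedSpace.exp (t * b)] := by
  have hba : b - a ≠ 0 := sub_ne_zero.mpr hab.symm
  set P : Matrix (Fin 2) (Fin 2) 𝕂 := !![1, c; 0, b - a]
  have hP : IsUnit P := by
    rw [isUnit_iff_isUnit_det, det_fin_two_of]
    simpa using hba
  have hPinv : P⁻¹ = !![1, -c / (b - a); 0, (b - a)⁻¹] := by
    rw [inv_upperTriangular_fin_two c one_ne_zero hba, inv_one, one_mul]
  have hconj : t • !![a, c; 0, b] = P * diagonal ![t * a, t * b] * P⁻¹ := by
    rw [hPinv]
    ext i j
    fin_cases i <;> fin_cases j <;> simp [P, diagonal_fin_two] <;> field_simp; ring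
  rw [hconj, exp_conj P _ hP, exp_diagonal, hPinv]
  ext i j
  fin_cases i <;> fin_cases j <;> simp [P, diagonal_fin_two] <;> field_simp; ring

end Matrix

/-- For `n ≥ 2`, `A_n` is invertible and
`T_n(t)·A_n⁻¹ = (in/(1-n⁴))·e^{tni}·[[(n²-1)e^{it/n}, (n²-1)n sin(t/n) + i n e^{-it/n}],
[0, (n²+1)e^{-it/n}]]` where `T_n(t) = e^{tA_n}`. -/
theorem battyT_mul_inv (n : ℕ) (hn : 2 ≤ n) :
    IsUnit (battyA n) ∧ ∀ t : ℝ,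
      NormedSpace.exp ((t : ℂ) • battyA n) * (battyA n)⁻¹ =
        ((I * n) / (1 - (n : ℂ) ^ 4)) •
          Complex.exp ((t : ℂ) * n * I) •
            !![((n : ℂ) ^ 2 - 1) * Complex.exp (I * t / n),
                ((n : ℂ) ^ 2 - 1) * n * Complex.sin ((t : ℂ) / n)
                  + I * n * Complex.exp (-I * t / n);
               0, ((n : ℂ) ^ 2 + 1) * Complex.exp (-I * t / n)] := by
  have hn0 : (n : ℂ) ≠ 0 := by norm_cast; omega
  have hn1 : (n : ℂ) ^ 2 - 1 ≠ 0 := by rw [sub_ne_zero]; norm_cast; nlinarith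
  have hn2 : (n : ℂ) ^ 2 + 1 ≠ 0 := by norm_cast
  have hn4 : 1 - (n : ℂ) ^ 4 ≠ 0 := by
    rw [show 1 - (n : ℂ) ^ 4 = -((n ^ 2 - 1) * (n ^ 2 + 1)) by ring]
    simp [hn1, hn2]
  have ha : (n : ℂ) * I + I / n = I * (n ^ 2 + 1) / n := by field_simp
  have hb : (n : ℂ) * I - I / n = I * (n ^ 2 - 1) / n := by field_simp
  have ha0 : (n : ℂ) * I + I / n ≠ 0 := by rw [ha]; simp [hn0, hn2]
  have hb0 : (n : ℂ) * I - I / n ≠ 0 := by rw [hb]; simp [hn0, hn1]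
  have hab : (n : ℂ) * I + I / n ≠ (n : ℂ) * I - I / n := by
    rw [ne_eq, ← sub_eq_zero, add_sub_sub_cancel, ← two_mul]
    simp [hn0]
  refine ⟨?_, fun t => ?_⟩
  · rw [battyA, Matrix.isUnit_iff_isUnit_det, Matrix.det_fin_two_of]
    simp [ha0, hb0]
  have hexp_a : cexp (t * ((n : ℂ) * I + I / n)) = cexp (t * n * I) * cexp (I * t / n) := by
    rw [← Complex.exp_add]; ring_nf
  have hexp_b : cexp (t * ((n : ℂ) * I - I / n)) = cexp (t * n * I) * cexp (-I * t / n) := by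
    rw [← Complex.exp_add]; ring_nf
  have hsin : Complex.sin (t / n) = (cexp (-I * t / n) - cexp (I * t / n)) * I / 2 := by
    rw [Complex.sin]; ring_nf
  rw [battyA, Matrix.exp_smul_upperTriangular_fin_two _ _ hab,
    Matrix.inv_upperTriangular_fin_two _ ha0 hb0, ← Complex.exp_eq_exp_ℂ, hexp_a, hexp_b, hsin,
    ha, hb]
  generalize cexp (t * n * I) = E, cexp (I * t / n) = X, cexp (-I * t / n) = Y
  ext i j
  fin_cases i <;> fin_cases j <;> simp <;> field_simp <;> simp only [I_sq, I_pow_four] <;> ring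
end

section
/- Let T be a strongly continuous semigroup on a Banach space X with generator A, and let T̃(t)B̃ = B̃ ∘ T(t) be the induced semigroup on the closure X̃ of {D ∘ R(μ, A) : D ∈ L(X)} in L(X). Then for every B̃ ∈ X̃ and μ in the resolvent set of A and of Ã, the resolvent identity R(μ, Ã) B̃ = B̃ ∘ R(μ, A) holds, where à is the generator of T̃. -/
/-!
Put `C = R(μ, Ã) B̃`. Evaluating the operator-norm difference quotients `t⁻¹ (C ∘ T(t) - C)`
at a point of `D(A)` shows that `Ã C` acts as `C ∘ A` there, so `B̃ = (Ã - μ) C = C ∘ (A - μ)`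
on `D(A)`; composing with `R(μ, A)` gives `C = B̃ ∘ R(μ, A)`.
-/

open Filter Set

variable {X : Type*} [NormedAddCommGroup X] [NormedSpace ℂ X] [CompleteSpace X]

/-- A strongly continuous one-parameter semigroup of bounded operators. -/
structure IsC0Semigroup (T : ℝ → X →L[ℂ] X) : Prop where
  map_zero : T 0 = ContinuousLinearMap.id ℂ X
  map_add : ∀ s t : ℝ, 0 ≤ s → 0 ≤ t → T (s + t) = (T s).comp (T t)
  strong_cont : ∀ x : X, ContinuousOn (fun t => T t x) (Set.Ici (0 : ℝ))

def genDom (T : ℝ → X →L[ℂ] X) : Set X :=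
  {x | ∃ y : X, Tendsto (fun t : ℝ => t⁻¹ • (T t x - x)) (nhdsWithin 0 (Set.Ioi 0)) (nhds y)}

def IsGenerator (T : ℝ → X →L[ℂ] X) (A : X → X) : Prop :=
  ∀ x ∈ genDom T,
    Tendsto (fun t : ℝ => t⁻¹ • (T t x - x)) (nhdsWithin 0 (Set.Ioi 0)) (nhds (A x))

/-- The space `X̃`: the operator-norm closure of `{D ∘ R₀ : D ∈ L(X)}`, where `R₀` is a
fixed resolvent operator of the generator. -/
def tildeSpace (R₀ : X →L[ℂ] X) : Set (X →L[ℂ] X) :=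
  closure {B : X →L[ℂ] X | ∃ D : X →L[ℂ] X, B = D.comp R₀}

/-- The domain of the generator `Ã` of the induced semigroup `T̃(t)B = B ∘ T(t)` on `X̃`. -/
def tildeGenDom (T : ℝ → X →L[ℂ] X) (R₀ : X →L[ℂ] X) : Set (X →L[ℂ] X) :=
  {B ∈ tildeSpace R₀ | ∃ C : X →L[ℂ] X,
    Tendsto (fun t : ℝ => t⁻¹ • (B.comp (T t) - B)) (nhdsWithin 0 (Set.Ioi 0)) (nhds C)}

/-- `Ã` is the generator of the induced semigroup `T̃(t)B = B ∘ T(t)`. -/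
def IsTildeGenerator (T : ℝ → X →L[ℂ] X) (R₀ : X →L[ℂ] X)
    (Atil : (X →L[ℂ] X) → (X →L[ℂ] X)) : Prop :=
  ∀ B ∈ tildeGenDom T R₀,
    Tendsto (fun t : ℝ => t⁻¹ • (B.comp (T t) - B)) (nhdsWithin 0 (Set.Ioi 0))
      (nhds (Atil B))

open Topology

theorem IsGenerator.apply_eq_of_tendsto_comp {E F : Type*} [NormedAddCommGroup E]
    [NormedSpace ℂ E] [NormedAddCommGroup F] [NormedSpace ℂ F]
    {T : ℝ → E →L[ℂ] E} {A : E → E} (hA : IsGenerator T A) {C D : E →L[ℂ] F}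
    (hCD : Tendsto (fun t : ℝ => t⁻¹ • (C.comp (T t) - C)) (𝓝[>] 0) (𝓝 D))
    {x : E} (hx : x ∈ genDom T) : D x = C (A x) := by
  have h_eval : Tendsto (fun t : ℝ => t⁻¹ • (C (T t x) - C x)) (𝓝[>] 0) (𝓝 (D x)) :=
    ((ContinuousLinearMap.apply ℂ F x).continuous.tendsto D).comp hCD
  have h_map : Tendsto (fun t : ℝ => t⁻¹ • (C (T t x) - C x)) (𝓝[>] 0) (𝓝 (C (A x))) := by
    simpa only [Function.comp_def, ContinuousLinearMap.map_smul_of_tower, map_sub] using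
      (C.continuous.tendsto (A x)).comp (hA x hx)
  exact tendsto_nhds_unique h_eval h_map

theorem tilde_resolvent_identity_general
    (T : ℝ → X →L[ℂ] X)
    (A : X → X) (hA : IsGenerator T A)
    -- `R₀` is a resolvent operator of `A` at some point `μ₀ ∉ σ(A)`:
    (R₀ : X →L[ℂ] X)
    -- `Ã` is the generator of the induced semigroup on `X̃`:
    (Atil : (X →L[ℂ] X) → (X →L[ℂ] X)) (hAtil : IsTildeGenerator T R₀ Atil)
    -- `μ` is in the resolvent set of `A`, with resolvent `Rμ`:
    (μ : ℂ) (Rμ : X →L[ℂ] X)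
    (hRμdom : ∀ x, Rμ x ∈ genDom T)
    (hRμright : ∀ x, A (Rμ x) - μ • Rμ x = x)
    -- `μ` is in the resolvent set of `Ã`, with resolvent `Rtil` (acting on `X̃`):
    (Rtil : (X →L[ℂ] X) → (X →L[ℂ] X))
    (hRtildom : ∀ B ∈ tildeSpace R₀, Rtil B ∈ tildeGenDom T R₀)
    (hRtilright : ∀ B ∈ tildeSpace R₀, Atil (Rtil B) - μ • Rtil B = B) :
    ∀ B ∈ tildeSpace R₀, Rtil B = B.comp Rμ := by
  intro B hB
  have hAtil_apply : ∀ x ∈ genDom T, Atil (Rtil B) x = Rtil B (A x) :=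
    fun x hx => hA.apply_eq_of_tendsto_comp (hAtil _ (hRtildom B hB)) hx
  ext y
  calc Rtil B y = Rtil B (A (Rμ y) - μ • Rμ y) := by rw [hRμright]
    _ = (Atil (Rtil B) - μ • Rtil B) (Rμ y) := by
      rw [map_sub, map_smul, ← hAtil_apply _ (hRμdom y)]; rfl
    _ = B (Rμ y) := by rw [hRtilright B hB]

/-- For the induced semigroup `T̃(t)B̃ = B̃ ∘ T(t)` on
`X̃ = closure {D ∘ R(μ₀, A) : D ∈ L(X)}`, the resolvent of its generator `Ã` at any common
resolvent point `μ` satisfies `R(μ, Ã) B̃ = B̃ ∘ R(μ, A)` for all `B̃ ∈ X̃`. -/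
theorem tilde_resolvent_identity
    (T : ℝ → X →L[ℂ] X) (hT : IsC0Semigroup T)
    (A : X → X) (hA : IsGenerator T A)
    -- `R₀` is a resolvent operator of `A` at some point `μ₀ ∉ σ(A)`:
    (μ₀ : ℂ) (R₀ : X →L[ℂ] X)
    (hR₀dom : ∀ x, R₀ x ∈ genDom T)
    (hR₀right : ∀ x, A (R₀ x) - μ₀ • R₀ x = x)
    (hR₀left : ∀ x ∈ genDom T, R₀ (A x - μ₀ • x) = x)
    -- `Ã` is the generator of the induced semigroup on `X̃`:
    (Atil : (X →L[ℂ] X) → (X →L[ℂ] X)) (hAtil : IsTildeGenerator T R₀ Atil)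
    -- `μ` is in the resolvent set of `A`, with resolvent `Rμ`:
    (μ : ℂ) (Rμ : X →L[ℂ] X)
    (hRμdom : ∀ x, Rμ x ∈ genDom T)
    (hRμright : ∀ x, A (Rμ x) - μ • Rμ x = x)
    (hRμleft : ∀ x ∈ genDom T, Rμ (A x - μ • x) = x)
    -- `μ` is in the resolvent set of `Ã`, with resolvent `Rtil` (acting on `X̃`):
    (Rtil : (X →L[ℂ] X) → (X →L[ℂ] X))
    (hRtildom : ∀ B ∈ tildeSpace R₀, Rtil B ∈ tildeGenDom T R₀)
    (hRtilright : ∀ B ∈ tildeSpace R₀, Atil (Rtil B) - μ • Rtil B = B)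
    (hRtilleft : ∀ B ∈ tildeGenDom T R₀, Rtil (Atil B - μ • B) = B) :
    ∀ B ∈ tildeSpace R₀, Rtil B = B.comp Rμ :=
  tilde_resolvent_identity_general T A hA R₀ Atil hAtil μ Rμ hRμdom hRμright Rtil hRtildom
    hRtilright
end

section
/- Let H be a separable Hilbert space with orthonormal basis (e_n)_{n≥0}, and define T(t)e_0 = e^{it}e_0, T(t)e_{2k−1} = e^{(ik−1/k)t}e_{2k−1}, T(t)e_{2k} = e^{(ik−1/k)t}(t·e_{2k−1} + e_{2k}) for k ≥ 1. Then on each invariant 2-dimensional block span{e_{2k−1}, e_{2k}}, the operator norm ‖T(t)|_{H_k}‖ satisfies ‖T(t)|_{H_k}‖ ≥ t·e^{−t/k}, and consequently sup over k gives ‖T(t)‖ ≥ c·t for some c > 0 and all t ≥ 1. -/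
/-!
The `(0, 1)` entry of the block is `e^{(ik - 1/k)t} t`, of modulus `t e^{-t/k}`, and an entry of a
matrix is bounded by its operator norm. Taking `k = ⌈t⌉` makes `e^{-t/k} ≥ e^{-1}`, so the supremum
is at least `t / e`; it is finite because every block has norm at most that of `[[1, t], [0, 1]]`.
-/

open Complex

/-- The block `T(t)|_{H_k} = e^{(ik - 1/k)t}·[[1, t], [0, 1]]` on `H_k = span{e_{2k-1}, e_{2k}}`. -/
noncomputable def blockT (k : ℕ) (t : ℝ) : Matrix (Fin 2) (Fin 2) ℂ :=
  Complex.exp (((k : ℂ) * I - 1 / k) * t) • !![1, (t : ℂ); 0, 1]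

theorem Matrix.norm_entry_le_norm_toEuclideanCLM {𝕜 n : Type*} [RCLike 𝕜] [Fintype n]
    [DecidableEq n] (M : Matrix n n 𝕜) (i j : n) :
    ‖M i j‖ ≤ ‖Matrix.toEuclideanCLM (𝕜 := 𝕜) M‖ := by
  set T := Matrix.toEuclideanCLM (𝕜 := 𝕜) M
  have hcol : T (EuclideanSpace.single j 1) i = M i j := by
    simp [T, EuclideanSpace.single, Matrix.mulVec_single]
  calc ‖M i j‖ = ‖T (EuclideanSpace.single j 1) i‖ := by rw [hcol]
    _ ≤ ‖T (EuclideanSpace.single j 1)‖ := PiLp.norm_apply_le _ i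
    _ ≤ ‖T‖ * ‖EuclideanSpace.single j (1 : 𝕜)‖ := T.le_opNorm _
    _ = ‖T‖ := by simp

theorem norm_exp_blockT_coeff (k : ℕ) (t : ℝ) :
    ‖cexp (((k : ℂ) * I - 1 / k) * t)‖ = Real.exp (-t / k) := by
  rw [Complex.norm_exp]
  congr 1
  simp only [one_div, mul_re, sub_re, natCast_re, I_re, mul_zero, natCast_im, I_im, mul_one,
    sub_self, inv_re, normSq_natCast, div_self_mul_self', zero_sub, ofReal_re, neg_mul, sub_im,
    mul_im, add_zero, inv_im, neg_zero, zero_div, sub_zero, ofReal_im]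
  ring

theorem opNorm2_blockT_le (k : ℕ) {t : ℝ} (ht : 0 ≤ t) :
    opNorm2 (blockT k t) ≤ opNorm2 !![1, (t : ℂ); 0, 1] := by
  rw [opNorm2, blockT, map_smul, norm_smul, norm_exp_blockT_coeff]
  refine mul_le_of_le_one_left (norm_nonneg _) (Real.exp_le_one_iff.mpr ?_)
  rw [neg_div, neg_nonpos]
  positivity

theorem mul_exp_le_opNorm2_blockT (k : ℕ) {t : ℝ} (ht : 0 ≤ t) :
    t * Real.exp (-t / k) ≤ opNorm2 (blockT k t) := by
  calc t * Real.exp (-t / k) = ‖blockT k t 0 1‖ := by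
        rw [blockT, Matrix.smul_apply, smul_eq_mul, norm_mul, norm_exp_blockT_coeff]
        simp [abs_of_nonneg ht, mul_comm]
    _ ≤ opNorm2 (blockT k t) := Matrix.norm_entry_le_norm_toEuclideanCLM _ 0 1

/-- On each two-dimensional block, `‖T(t)|_{H_k}‖ ≥ t e^{-t/k}` (for `t ≥ 0`), and
consequently `sup_k ‖T(t)|_{H_k}‖ ≥ c t` for some `c > 0` and all `t ≥ 1`. -/
theorem blockT_norm_lower :
    (∀ k : ℕ, 1 ≤ k → ∀ t : ℝ, 0 ≤ t →
        t * Real.exp (-t / k) ≤ opNorm2 (blockT k t)) ∧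
    ∃ c : ℝ, 0 < c ∧ ∀ t : ℝ, 1 ≤ t →
        c * t ≤ ⨆ k : {m : ℕ // 1 ≤ m}, opNorm2 (blockT k t) := by
  refine ⟨fun k _ t ht ↦ mul_exp_le_opNorm2_blockT k ht, Real.exp (-1), Real.exp_pos _,
    fun t ht ↦ ?_⟩
  have ht0 : 0 ≤ t := zero_le_one.trans ht
  have hk : 1 ≤ ⌈t⌉₊ := Nat.one_le_ceil_iff.mpr (zero_lt_one.trans_le ht)
  have hbdd : BddAbove (Set.range fun k : {m : ℕ // 1 ≤ m} ↦ opNorm2 (blockT k t)) :=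
    ⟨_, Set.forall_mem_range.mpr fun k ↦ opNorm2_blockT_le k ht0⟩
  have hexp : Real.exp (-1) ≤ Real.exp (-t / ⌈t⌉₊) := by
    rw [Real.exp_le_exp, neg_div, neg_le_neg_iff,
      div_le_one (by exact_mod_cast hk)]
    exact Nat.le_ceil t
  calc Real.exp (-1) * t ≤ t * Real.exp (-t / ⌈t⌉₊) := by
        rw [mul_comm]; exact mul_le_mul_of_nonneg_left hexp ht0
    _ ≤ opNorm2 (blockT ⌈t⌉₊ t) := mul_exp_le_opNorm2_blockT _ ht0
    _ ≤ _ := le_ciSup hbdd ⟨⌈t⌉₊, hk⟩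
end

section
/- In the same example, for each k ≥ 1 the block generator A_k = [[ik − 1/k, 1], [0, ik − 1/k]] satisfies: ‖e^{tA_k} A_k^{-1}‖ is uniformly bounded in k and t ≥ 0, i.e., there is M > 0 with ‖e^{tA_k} A_k^{-1}‖ ≤ M for all k ≥ 1, t ≥ 0. -/
open Complex

/-- The Jordan block generator `A_k = [[ik - 1/k, 1], [0, ik - 1/k]]`. -/
noncomputable def jordanA (k : ℕ) : Matrix (Fin 2) (Fin 2) ℂ :=
  !![(k : ℂ) * I - 1 / k, 1; 0, (k : ℂ) * I - 1 / k]

/-! Write `A_k = λ • 1 + N` with `λ = ik - 1/k` and `N² = 0`. Then `e^{tA_k} = e^{tλ} (1 + tN)`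
and `A_k⁻¹ = λ⁻¹ • 1 - λ⁻² • N`, so `e^{tA_k} A_k⁻¹ = e^{tλ} λ⁻¹ • 1 + e^{tλ} (tλ⁻¹ - λ⁻²) • N`.
Since `|e^{tλ}| = e^{-t/k}` and `|λ| ≥ k ≥ 1`, every coefficient is bounded; the only one that
grows with `t` is controlled by `t e^{-t/k} / |λ| ≤ (t/k) e^{-t/k} ≤ 1`. -/

namespace NormedSpace

theorem exp_eq_one_add_of_mul_self_eq_zero {𝔸 : Type*} [Ring 𝔸] [Algebra ℚ 𝔸]
    [TopologicalSpace 𝔸] [IsTopologicalRing 𝔸] {x : 𝔸} (hx : x * x = 0) : exp x = 1 + x := by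
  have hvanish : ∀ n ∉ Finset.range 2, ((n.factorial : ℚ)⁻¹ • x ^ n) = 0 := by
    intro n hn
    obtain ⟨m, rfl⟩ := Nat.exists_eq_add_of_le' (not_lt.mp (Finset.mem_range.not.mp hn))
    rw [pow_add, sq, hx, mul_zero, smul_zero]
  simp only [exp_eq_tsum_rat]
  rw [tsum_eq_sum hvanish]
  simp [Finset.sum_range_succ]

end NormedSpace

namespace Matrix

variable {n 𝕂 : Type*} [Fintype n] [DecidableEq n]

theorem inv_smul_one_add_of_mul_self_eq_zero [Field 𝕂] {N : Matrix n n 𝕂} (hN : N * N = 0)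
    {c : 𝕂} (hc : c ≠ 0) : (c • 1 + N)⁻¹ = c⁻¹ • 1 - c⁻¹ ^ 2 • N := by
  apply inv_eq_right_inv
  simp only [add_mul, mul_sub, mul_smul_comm, smul_mul_assoc, one_mul, mul_one, hN]
  match_scalars <;> simp [hc, sq]

section Exp

variable [NormedField 𝕂] [NormedAlgebra ℚ 𝕂] [CompleteSpace 𝕂]

theorem exp_smul_one (c : 𝕂) :
    NormedSpace.exp (c • (1 : Matrix n n 𝕂)) = NormedSpace.exp c • 1 := by
  rw [smul_one_eq_diagonal, exp_diagonal, Pi.exp_def, ← smul_one_eq_diagonal]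

theorem exp_smul_one_add_of_mul_self_eq_zero {N : Matrix n n 𝕂} (hN : N * N = 0) (c : 𝕂) :
    NormedSpace.exp (c • 1 + N) = NormedSpace.exp c • (1 + N) := by
  rw [exp_add_of_commute _ _ ((Commute.one_left N).smul_left c), exp_smul_one,
    NormedSpace.exp_eq_one_add_of_mul_self_eq_zero hN, smul_one_mul]

theorem exp_smul_mul_inv_of_mul_self_eq_zero {N : Matrix n n 𝕂} (hN : N * N = 0) {c : 𝕂}
    (hc : c ≠ 0) (t : 𝕂) :
    NormedSpace.exp (t • (c • 1 + N)) * (c • 1 + N)⁻¹ =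
      (NormedSpace.exp (t * c) * c⁻¹) • 1 +
        (NormedSpace.exp (t * c) * (t * c⁻¹ - c⁻¹ ^ 2)) • N := by
  have htN : (t • N) * (t • N) = 0 := by rw [smul_mul_smul_comm, hN, smul_zero]
  rw [inv_smul_one_add_of_mul_self_eq_zero hN hc, smul_add, smul_smul,
    exp_smul_one_add_of_mul_self_eq_zero htN]
  simp only [smul_mul_assoc, add_mul, mul_sub, mul_smul_comm, one_mul, mul_one, hN, smul_zero]
  module

end Exp

end Matrix

theorem Real.mul_exp_neg_le_one (x : ℝ) : x * Real.exp (-x) ≤ 1 :=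
  calc x * Real.exp (-x) ≤ Real.exp x * Real.exp (-x) := by
        gcongr; linarith [Real.add_one_le_exp x]
    _ = 1 := by rw [← Real.exp_add, add_neg_cancel, Real.exp_zero]

namespace Complex

variable {z : ℂ} {t : ℝ}

theorem norm_exp_ofReal_mul_le_one (ht : 0 ≤ t) (hz : z.re ≤ 0) : ‖cexp (t * z)‖ ≤ 1 := by
  rw [norm_exp, re_ofReal_mul, Real.exp_le_one_iff]
  exact mul_nonpos_of_nonneg_of_nonpos ht hz

theorem norm_exp_ofReal_mul_mul_inv_le_one (ht : 0 ≤ t) (hz : z.re ≤ 0) (hz1 : 1 ≤ ‖z‖) :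
    ‖cexp (t * z) * z⁻¹‖ ≤ 1 := by
  rw [norm_mul, norm_inv]
  exact mul_le_one₀ (norm_exp_ofReal_mul_le_one ht hz) (by positivity) (inv_le_one_of_one_le₀ hz1)

theorem norm_exp_ofReal_mul_mul_ofReal_mul_inv_le_one (ht : 0 ≤ t) (hz : 1 ≤ -z.re * ‖z‖) :
    ‖cexp (t * z) * (t * z⁻¹)‖ ≤ 1 := by
  have hnorm : 0 < ‖z‖ :=
    (norm_nonneg z).lt_of_ne (by rintro h; rw [← h, mul_zero] at hz; linarith)
  have hinv : ‖z‖⁻¹ ≤ -z.re := by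
    rw [inv_le_iff_one_le_mul₀ hnorm]; linarith
  calc ‖cexp (t * z) * (t * z⁻¹)‖ = t * ‖z‖⁻¹ * Real.exp (-(t * -z.re)) := by
        rw [norm_mul, norm_mul, norm_exp, re_ofReal_mul, norm_real, Real.norm_of_nonneg ht,
          norm_inv, mul_neg, neg_neg]; ring
    _ ≤ (t * -z.re) * Real.exp (-(t * -z.re)) := by gcongr
    _ ≤ 1 := Real.mul_exp_neg_le_one _

theorem norm_exp_ofReal_mul_mul_sub_le_two (ht : 0 ≤ t) (hz1 : 1 ≤ ‖z‖)
    (hz : 1 ≤ -z.re * ‖z‖) : ‖cexp (t * z) * (t * z⁻¹ - z⁻¹ ^ 2)‖ ≤ 2 := by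
  have hre : z.re ≤ 0 := by nlinarith
  calc ‖cexp (t * z) * (t * z⁻¹ - z⁻¹ ^ 2)‖
        = ‖cexp (t * z) * (t * z⁻¹) - cexp (t * z) * z⁻¹ * z⁻¹‖ := by ring_nf
    _ ≤ ‖cexp (t * z) * (t * z⁻¹)‖ + ‖cexp (t * z) * z⁻¹‖ * ‖z⁻¹‖ := by
          rw [← norm_mul]; apply norm_sub_le
    _ ≤ 1 + 1 * 1 := by
          gcongr
          · exact norm_exp_ofReal_mul_mul_ofReal_mul_inv_le_one ht hz
          · exact norm_exp_ofReal_mul_mul_inv_le_one ht hre hz1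
          · rw [norm_inv]; exact inv_le_one_of_one_le₀ hz1
    _ = 2 := by norm_num

end Complex

theorem opNorm2_nonneg (A : Matrix (Fin 2) (Fin 2) ℂ) : 0 ≤ opNorm2 A :=
  norm_nonneg _

theorem opNorm2_smul_add_smul_le (a b : ℂ) (A B : Matrix (Fin 2) (Fin 2) ℂ) :
    opNorm2 (a • A + b • B) ≤ ‖a‖ * opNorm2 A + ‖b‖ * opNorm2 B := by
  unfold opNorm2
  rw [map_add, map_smul, map_smul, ← norm_smul, ← norm_smul]
  exact norm_add_le _ _

noncomputable def jordanEigenvalue (k : ℕ) : ℂ := (k : ℂ) * I - 1 / k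

def jordanNilpotent : Matrix (Fin 2) (Fin 2) ℂ := !![0, 1; 0, 0]

theorem jordanNilpotent_mul_self : jordanNilpotent * jordanNilpotent = 0 := by
  ext i j
  fin_cases i <;> fin_cases j <;> simp [jordanNilpotent]

theorem jordanA_eq (k : ℕ) : jordanA k = jordanEigenvalue k • 1 + jordanNilpotent := by
  ext i j
  fin_cases i <;> fin_cases j <;> simp [jordanA, jordanEigenvalue, jordanNilpotent]

theorem natCast_le_norm_jordanEigenvalue (k : ℕ) : (k : ℝ) ≤ ‖jordanEigenvalue k‖ :=
  calc (k : ℝ) = |(jordanEigenvalue k).im| := by simp [jordanEigenvalue]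
    _ ≤ ‖jordanEigenvalue k‖ := abs_im_le_norm _

theorem one_le_neg_re_mul_norm_jordanEigenvalue {k : ℕ} (hk : 1 ≤ k) :
    1 ≤ -(jordanEigenvalue k).re * ‖jordanEigenvalue k‖ := by
  have hk' : (0 : ℝ) < k := by exact_mod_cast hk
  have hre : -(jordanEigenvalue k).re = (k : ℝ)⁻¹ := by simp [jordanEigenvalue]
  rw [hre, ← div_eq_inv_mul, le_div_iff₀ hk', one_mul]
  exact natCast_le_norm_jordanEigenvalue k

/-- `‖e^{tA_k} A_k⁻¹‖` is uniformly bounded over `k ≥ 1` and `t ≥ 0`. -/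
theorem exp_jordanA_mul_inv_bounded :
    ∃ M : ℝ, 0 < M ∧ ∀ k : ℕ, 1 ≤ k → ∀ t : ℝ, 0 ≤ t →
      opNorm2 (NormedSpace.exp ((t : ℂ) • jordanA k) * (jordanA k)⁻¹) ≤ M := by
  refine ⟨opNorm2 1 + 2 * opNorm2 jordanNilpotent + 1,
    by linarith [opNorm2_nonneg 1, opNorm2_nonneg jordanNilpotent], fun k hk t ht => ?_⟩
  set z := jordanEigenvalue k
  have hz1 : 1 ≤ ‖z‖ := le_trans (by exact_mod_cast hk) (natCast_le_norm_jordanEigenvalue k)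
  have hz : 1 ≤ -z.re * ‖z‖ := one_le_neg_re_mul_norm_jordanEigenvalue hk
  have hre : z.re ≤ 0 := by nlinarith
  rw [jordanA_eq, Matrix.exp_smul_mul_inv_of_mul_self_eq_zero jordanNilpotent_mul_self
    (norm_pos_iff.mp (by linarith)), ← Complex.exp_eq_exp_ℂ]
  calc _ ≤ ‖cexp (t * z) * z⁻¹‖ * opNorm2 1 +
        ‖cexp (t * z) * (t * z⁻¹ - z⁻¹ ^ 2)‖ * opNorm2 jordanNilpotent :=
          opNorm2_smul_add_smul_le _ _ _ _
    _ ≤ 1 * opNorm2 1 + 2 * opNorm2 jordanNilpotent :=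
          add_le_add
            (mul_le_mul_of_nonneg_right (norm_exp_ofReal_mul_mul_inv_le_one ht hre hz1)
              (opNorm2_nonneg _))
            (mul_le_mul_of_nonneg_right (norm_exp_ofReal_mul_mul_sub_le_two ht hz1 hz)
              (opNorm2_nonneg _))
    _ ≤ opNorm2 1 + 2 * opNorm2 jordanNilpotent + 1 := by linarith
end

section
/- Let λ_n = i log n for n ≥ 2 and consider the diagonal semigroup T(t)e_n = e^{it log n} e_n on ℓ² with the modified norm ‖x‖₁² = |c_2|² + ∑_{n≥2} |c_{n+1} − c_n|² for x = ∑ c_n e_n. Then there exists M₀ > 0 such that ‖T(t)A^{-1}x‖₁ ≤ M₀ (t/log t) ‖x‖₁ for all t > e and all x, where A^{-1}e_n = (1/(i log n)) e_n. -/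
open Complex

/-- The square of the modified norm `‖x‖₁² = |c₂|² + ∑_{n ≥ 2} |c_{n+1} - c_n|²` of a
sequence `(c_n)_{n ≥ 2}` (indices below `2` are ignored). -/
noncomputable def normOneSq (c : ℕ → ℂ) : ℝ :=
  ‖c 2‖ ^ 2 + ∑' n : ℕ, ‖c (n + 3) - c (n + 2)‖ ^ 2

/-- The coordinatewise action of `T(t)A⁻¹` on a sequence:
`(T(t)A⁻¹ x)_n = c_n e^{i t log n} / (i log n)`. -/
noncomputable def TAinv (t : ℝ) (c : ℕ → ℂ) : ℕ → ℂ :=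
  fun n => c n * Complex.exp (I * t * Real.log n) / (I * Real.log n)

/-!
Write `κ(x) = e^{it log x} / (i log x)`, so that `T(t)A⁻¹x = (c_n κ(n))_n` and
`Δ(c κ)_n = (Δc)_n κ(n+1) + c_n (κ(n+1) - κ(n))`. Here `|κ| ≤ 2` on `[2, ∞)`, and
`|κ(n+1) - κ(n)| ≤ 4 (t / log t) / n`: the change of phase contributes at most
`min(2, t/n) / log(n+1)`, which is `≤ 2 (t / log t) / n` in both regimes `n + 1 ≤ t` and `t ≤ n + 1`
because `x / log x` increases on `[e, ∞)`. The remaining weighted sum `∑ |c_n|² / n²` is controlled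
by `‖x‖₁²` through Hardy's inequality applied to the differences of `c`.
-/

open Finset

theorem hardy_telescoping_step (a : ℕ → ℝ) (n : ℕ) :
    ((∑ k ∈ range (n + 1), a k) / (n + 1)) ^ 2 - 2 * a n * ((∑ k ∈ range (n + 1), a k) / (n + 1))
      ≤ (∑ k ∈ range n, a k) ^ 2 / n - (∑ k ∈ range (n + 1), a k) ^ 2 / (n + 1) := by
  rw [sum_range_succ]
  rcases n.eq_zero_or_pos with rfl | hn
  · simp only [range_zero, sum_empty, Nat.cast_zero]
    nlinarith
  · have hn' : (0 : ℝ) < n := by exact_mod_cast hn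
    set s := ∑ k ∈ range n, a k
    have key : s ^ 2 / n - (s + a n) ^ 2 / (n + 1)
        - (((s + a n) / (n + 1)) ^ 2 - 2 * a n * ((s + a n) / (n + 1)))
        = (n * a n - s) ^ 2 / (n * (n + 1) ^ 2) := by
      field_simp
      ring
    nlinarith [div_nonneg (sq_nonneg (n * a n - s)) (by positivity : (0 : ℝ) ≤ n * (n + 1) ^ 2)]

theorem hardy_sum_range_le (a : ℕ → ℝ) (N : ℕ) :
    ∑ n ∈ range N, ((∑ k ∈ range (n + 1), a k) / (n + 1)) ^ 2 ≤ 4 * ∑ n ∈ range N, a n ^ 2 := by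
  set A : ℕ → ℝ := fun n ↦ (∑ k ∈ range (n + 1), a k) / (n + 1)
  set B : ℕ → ℝ := fun n ↦ (∑ k ∈ range n, a k) ^ 2 / n
  have hB (n : ℕ) : B n - B (n + 1) = (∑ k ∈ range n, a k) ^ 2 / n
      - (∑ k ∈ range (n + 1), a k) ^ 2 / (n + 1) := by
    simp only [B, Nat.cast_add, Nat.cast_one]
  have htel : ∑ n ∈ range N, (A n ^ 2 - 2 * (a n * A n)) ≤ 0 :=
    calc ∑ n ∈ range N, (A n ^ 2 - 2 * (a n * A n))
        ≤ ∑ n ∈ range N, (B n - B (n + 1)) :=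
          sum_le_sum fun n _ ↦ by rw [hB, ← mul_assoc]; exact hardy_telescoping_step a n
      _ = - B N := by rw [sum_range_sub']; simp [B]
      _ ≤ 0 := neg_nonpos.2 (by positivity)
  -- `htel` reads `∑ A² ≤ 2 ∑ a A`, and Cauchy–Schwarz turns it into `∑ A² ≤ 4 ∑ a²`.
  rw [sum_sub_distrib, ← mul_sum] at htel
  have hcs := sum_mul_sq_le_sq_mul_sq (range N) a A
  have hA : 0 ≤ ∑ n ∈ range N, A n ^ 2 := sum_nonneg fun _ _ ↦ sq_nonneg _
  have ha : 0 ≤ ∑ n ∈ range N, a n ^ 2 := sum_nonneg fun _ _ ↦ sq_nonneg _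
  nlinarith

theorem norm_le_sum_norm_sub {E : Type*} [SeminormedAddCommGroup E] {v : ℕ → E} (hv : v 0 = 0)
    (n : ℕ) : ‖v n‖ ≤ ∑ k ∈ range n, ‖v (k + 1) - v k‖ := by
  simpa only [sum_range_sub, hv, sub_zero] using norm_sum_le (range n) fun k ↦ v (k + 1) - v k

theorem sum_range_sq_norm_div_le {E : Type*} [SeminormedAddCommGroup E] {v : ℕ → E}
    (hv : v 0 = 0) (N : ℕ) :
    ∑ n ∈ range N, (‖v (n + 1)‖ / (n + 1)) ^ 2 ≤ 4 * ∑ n ∈ range N, ‖v (n + 1) - v n‖ ^ 2 :=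
  (sum_le_sum fun n _ ↦ by gcongr; exact norm_le_sum_norm_sub hv (n + 1)).trans
    (hardy_sum_range_le _ N)

theorem one_le_div_log {t : ℝ} (ht : 1 < t) : 1 ≤ t / Real.log t := by
  have hlog : 0 < Real.log t := Real.log_pos ht
  rw [one_le_div hlog]
  linarith [Real.log_le_sub_one_of_pos (by linarith : 0 < t)]

theorem div_log_le_div_log {x y : ℝ} (hx : Real.exp 1 ≤ x) (hxy : x ≤ y) :
    x / Real.log x ≤ y / Real.log y := by
  have hx0 : 0 < x := (Real.exp_pos 1).trans_le hx
  have hlogx : 0 < Real.log x := Real.log_pos (by linarith [Real.add_one_le_exp 1])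
  have hlogy : 0 < Real.log y := hlogx.trans_le (Real.log_le_log hx0 hxy)
  have := Real.log_div_self_antitoneOn hx (hx.trans hxy) hxy
  rw [div_le_div_iff₀ (hx0.trans_le hxy) hx0] at this
  rw [div_le_div_iff₀ hlogx hlogy]
  linarith

theorem log_add_one_sub_log_le {m : ℝ} (hm : 0 < m) : Real.log (m + 1) - Real.log m ≤ m⁻¹ := by
  rw [← Real.log_div (by linarith) hm.ne', add_div, div_self hm.ne', one_div, add_comm]
  exact Real.log_le_sub_one_of_pos (by positivity) |>.trans_eq (add_sub_cancel_right _ _)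

theorem norm_exp_mul_I_sub_exp_mul_I_le (x y : ℝ) :
    ‖cexp (x * I) - cexp (y * I)‖ ≤ min 2 |x - y| := by
  refine le_min ?_ ?_
  · calc ‖cexp (x * I) - cexp (y * I)‖ ≤ ‖cexp (x * I)‖ + ‖cexp (y * I)‖ := norm_sub_le _ _
      _ = 2 := by rw [norm_exp_ofReal_mul_I, norm_exp_ofReal_mul_I]; norm_num
  · have h : cexp (x * I) - cexp (y * I) = cexp (y * I) * (cexp (I * ↑(x - y)) - 1) := by
      rw [mul_sub, ← Complex.exp_add]; push_cast; ring_nf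
    rw [h, norm_mul, norm_exp_ofReal_mul_I, one_mul, ← Real.norm_eq_abs]
    exact Real.norm_exp_I_mul_ofReal_sub_one_le

theorem min_two_div_div_log_add_one_le {t m : ℝ} (ht : Real.exp 1 < t) (hm : 2 ≤ m) :
    min 2 (t / m) / Real.log (m + 1) ≤ 2 * (t / Real.log t) / m := by
  have ht1 : 1 < t := (Real.one_lt_exp_iff.2 one_pos).trans ht
  have hm0 : 0 < m := by linarith
  have hL : 0 < Real.log (m + 1) := Real.log_pos (by linarith)
  have hlogt : 0 < Real.log t := Real.log_pos ht1
  have hρ : 1 ≤ t / Real.log t := one_le_div_log ht1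
  rcases le_total t (m + 1) with htm | htm
  · calc min 2 (t / m) / Real.log (m + 1) ≤ t / m / Real.log (m + 1) := by
          gcongr; exact min_le_right _ _
      _ = t / Real.log (m + 1) / m := by ring
      _ ≤ t / Real.log t / m := by gcongr
      _ ≤ 2 * (t / Real.log t) / m := by gcongr; linarith
  · have := div_log_le_div_log (by linarith [Real.exp_one_lt_d9]) htm
    calc min 2 (t / m) / Real.log (m + 1) ≤ 2 / Real.log (m + 1) := by
          gcongr; exact min_le_left _ _
      _ = 2 * ((m + 1) / Real.log (m + 1)) / (m + 1) := by field_simp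
      _ ≤ 2 * (t / Real.log t) / m := by gcongr; linarith

theorem inv_log_sub_inv_log_add_one_le {m : ℝ} (hm : 2 ≤ m) :
    (Real.log m)⁻¹ - (Real.log (m + 1))⁻¹ ≤ 2 / m := by
  have hm0 : 0 < m := by linarith
  have h2 : 1 / 2 < Real.log m := by
    linarith [Real.log_two_gt_d9, Real.log_le_log two_pos hm]
  have h3 : 1 ≤ Real.log (m + 1) := by
    rw [Real.le_log_iff_exp_le (by linarith)]
    linarith [Real.exp_one_lt_d9]
  have hδ := log_add_one_sub_log_le hm0
  rw [inv_sub_inv (by linarith) (by linarith), div_le_div_iff₀ (by positivity) hm0]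
  have : 1 / 2 ≤ Real.log m * Real.log (m + 1) := by nlinarith
  calc (Real.log (m + 1) - Real.log m) * m ≤ m⁻¹ * m := by gcongr
    _ = 1 := inv_mul_cancel₀ hm0.ne'
    _ ≤ 2 * (Real.log m * Real.log (m + 1)) := by linarith

noncomputable def TAinvSymbol (t x : ℝ) : ℂ :=
  cexp (↑(t * Real.log x) * I) / (I * Real.log x)

theorem TAinv_apply (t : ℝ) (c : ℕ → ℂ) (n : ℕ) : TAinv t c n = c n * TAinvSymbol t n := by
  simp only [TAinv, TAinvSymbol, ofReal_mul]
  ring_nf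

theorem norm_TAinvSymbol_le_two (t : ℝ) {x : ℝ} (hx : 2 ≤ x) : ‖TAinvSymbol t x‖ ≤ 2 := by
  have hlog : 1 / 2 < Real.log x := by
    linarith [Real.log_two_gt_d9, Real.log_le_log two_pos hx]
  rw [TAinvSymbol, norm_div, norm_exp_ofReal_mul_I, norm_mul, norm_I, one_mul, norm_real,
    Real.norm_of_nonneg (by linarith), div_le_iff₀ (by linarith)]
  linarith

theorem norm_TAinvSymbol_add_one_sub_le {t m : ℝ} (ht : Real.exp 1 < t) (hm : 2 ≤ m) :
    ‖TAinvSymbol t (m + 1) - TAinvSymbol t m‖ ≤ 4 * (t / Real.log t) / m := by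
  have hm0 : 0 < m := by linarith
  have ht0 : 0 < t := (Real.exp_pos 1).trans ht
  set L := Real.log m
  set L' := Real.log (m + 1)
  have hL : 0 < L := Real.log_pos (by linarith)
  have hLL' : L ≤ L' := Real.log_le_log hm0 (by linarith)
  have hL' : 0 < L' := hL.trans_le hLL'
  have hnorm_inv (x : ℝ) (hx : 0 < x) : ‖(I * (x : ℂ))⁻¹‖ = x⁻¹ := by
    simp [abs_of_pos hx]
  have hsplit : TAinvSymbol t (m + 1) - TAinvSymbol t m
      = (cexp (↑(t * L') * I) - cexp (↑(t * L) * I)) * (I * L')⁻¹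
        + cexp (↑(t * L) * I) * ((I * L')⁻¹ - (I * L)⁻¹) := by
    simp only [TAinvSymbol, div_eq_mul_inv, L, L']
    ring
  have hphase : ‖(cexp (↑(t * L') * I) - cexp (↑(t * L) * I)) * (I * L')⁻¹‖
      ≤ 2 * (t / Real.log t) / m :=
    calc _ ≤ min 2 |t * L' - t * L| / L' := by
          rw [norm_mul, hnorm_inv L' hL', ← div_eq_mul_inv]
          gcongr
          exact norm_exp_mul_I_sub_exp_mul_I_le _ _
      _ ≤ min 2 (t / m) / L' := by
          gcongr
          rw [← mul_sub, abs_of_nonneg (by nlinarith), div_eq_mul_inv]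
          exact mul_le_mul_of_nonneg_left (log_add_one_sub_log_le hm0) ht0.le
      _ ≤ 2 * (t / Real.log t) / m := min_two_div_div_log_add_one_le ht hm
  have hmodulus : ‖cexp (↑(t * L) * I) * ((I * L')⁻¹ - (I * L)⁻¹)‖ ≤ 2 * (t / Real.log t) / m :=
    calc _ = L⁻¹ - L'⁻¹ := by
          rw [norm_mul, norm_exp_ofReal_mul_I, one_mul, ← norm_neg, neg_sub, mul_inv, mul_inv,
            ← mul_sub, norm_mul, norm_inv, norm_I, inv_one, one_mul, ← ofReal_inv, ← ofReal_inv,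
            ← ofReal_sub, norm_real, Real.norm_of_nonneg]
          exact sub_nonneg.2 (inv_anti₀ hL hLL')
      _ ≤ 2 / m := inv_log_sub_inv_log_add_one_le hm
      _ ≤ 2 * (t / Real.log t) / m := by
          gcongr
          linarith [one_le_div_log ((Real.one_lt_exp_iff.2 one_pos).trans ht)]
  rw [hsplit]
  calc _ ≤ _ := norm_add_le_of_le hphase hmodulus
    _ = 4 * (t / Real.log t) / m := by ring

theorem normOneSq_nonneg (c : ℕ → ℂ) : 0 ≤ normOneSq c :=
  add_nonneg (sq_nonneg _) (tsum_nonneg fun _ ↦ sq_nonneg _)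

theorem summable_sq_norm_div_and_tsum_le_normOneSq {c : ℕ → ℂ}
    (hc : Summable fun n ↦ ‖c (n + 3) - c (n + 2)‖ ^ 2) :
    Summable (fun n : ℕ ↦ (‖c (n + 2)‖ / (n + 1)) ^ 2) ∧
      ∑' n : ℕ, (‖c (n + 2)‖ / (n + 1)) ^ 2 ≤ 4 * normOneSq c := by
  set v : ℕ → ℂ := fun k ↦ if k = 0 then 0 else c (k + 1)
  have hpartial (N : ℕ) : ∑ n ∈ range N, (‖c (n + 2)‖ / (n + 1)) ^ 2 ≤ 4 * normOneSq c :=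
    calc ∑ n ∈ range N, (‖c (n + 2)‖ / (n + 1)) ^ 2
        ≤ ∑ n ∈ range (N + 1), (‖v (n + 1)‖ / (n + 1)) ^ 2 :=
          sum_le_sum_of_subset_of_nonneg (range_subset_range.2 N.le_succ) fun _ _ _ ↦ by positivity
      _ ≤ 4 * ∑ n ∈ range (N + 1), ‖v (n + 1) - v n‖ ^ 2 := sum_range_sq_norm_div_le rfl _
      _ = 4 * (‖c 2‖ ^ 2 + ∑ n ∈ range N, ‖c (n + 3) - c (n + 2)‖ ^ 2) := by
          rw [sum_range_succ', add_comm]; simp [v]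
      _ ≤ 4 * normOneSq c := by
          unfold normOneSq
          gcongr
          exact hc.sum_le_tsum _ fun _ _ ↦ sq_nonneg _
  exact ⟨summable_of_sum_range_le (fun _ ↦ sq_nonneg _) hpartial,
    Real.tsum_le_of_sum_range_le (fun _ ↦ sq_nonneg _) hpartial⟩

theorem norm_TAinv_sub_le {t : ℝ} (ht : Real.exp 1 < t) (c : ℕ → ℂ) (n : ℕ) :
    ‖TAinv t c (n + 3) - TAinv t c (n + 2)‖
      ≤ 2 * ‖c (n + 3) - c (n + 2)‖ + 4 * (t / Real.log t) * (‖c (n + 2)‖ / (n + 1)) := by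
  have hm : (2 : ℝ) ≤ n + 2 := by linarith [n.cast_nonneg (α := ℝ)]
  have hρ : 0 ≤ t / Real.log t :=
    zero_le_one.trans (one_le_div_log ((Real.one_lt_exp_iff.2 one_pos).trans ht))
  have hcast : ((n + 3 : ℕ) : ℝ) = (n + 2 : ℝ) + 1 := by push_cast; ring
  have hsplit : TAinv t c (n + 3) - TAinv t c (n + 2)
      = (c (n + 3) - c (n + 2)) * TAinvSymbol t ((n + 2 : ℝ) + 1)
        + c (n + 2) * (TAinvSymbol t ((n + 2 : ℝ) + 1) - TAinvSymbol t (n + 2)) := by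
    simp only [TAinv_apply, hcast, Nat.cast_add, Nat.cast_ofNat]
    ring
  rw [hsplit]
  refine (norm_add_le _ _).trans ?_
  rw [norm_mul, norm_mul]
  calc _ ≤ ‖c (n + 3) - c (n + 2)‖ * 2 + ‖c (n + 2)‖ * (4 * (t / Real.log t) / (n + 2)) := by
        gcongr
        · exact norm_TAinvSymbol_le_two t (by linarith)
        · exact norm_TAinvSymbol_add_one_sub_le ht hm
    _ ≤ ‖c (n + 3) - c (n + 2)‖ * 2 + ‖c (n + 2)‖ * (4 * (t / Real.log t) / (n + 1)) := by
        gcongr; linarith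
    _ = _ := by ring

theorem normOneSq_TAinv_le {t : ℝ} (ht : Real.exp 1 < t) {c : ℕ → ℂ}
    (hc : Summable fun n ↦ ‖c (n + 3) - c (n + 2)‖ ^ 2) :
    normOneSq (TAinv t c) ≤ (12 * (t / Real.log t)) ^ 2 * normOneSq c := by
  set ρ := t / Real.log t
  have hρ : 1 ≤ ρ := one_le_div_log ((Real.one_lt_exp_iff.2 one_pos).trans ht)
  obtain ⟨hw, hwc⟩ := summable_sq_norm_div_and_tsum_le_normOneSq hc
  set w : ℕ → ℝ := fun n ↦ ‖c (n + 2)‖ / (n + 1)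
  have hΔ (n : ℕ) : ‖TAinv t c (n + 3) - TAinv t c (n + 2)‖ ^ 2
      ≤ 8 * ‖c (n + 3) - c (n + 2)‖ ^ 2 + 32 * ρ ^ 2 * w n ^ 2 :=
    (pow_le_pow_left₀ (norm_nonneg _) (norm_TAinv_sub_le ht c n) 2).trans
      (add_sq_le.trans_eq (by ring))
  have hmajorant := (hc.mul_left 8).add (hw.mul_left (32 * ρ ^ 2))
  have h2 : ‖TAinv t c 2‖ ^ 2 ≤ 4 * ‖c 2‖ ^ 2 := by
    have := pow_le_pow_left₀ (norm_nonneg _) (norm_TAinvSymbol_le_two t le_rfl) 2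
    rw [TAinv_apply, norm_mul, mul_pow, Nat.cast_ofNat]
    nlinarith [sq_nonneg ‖c 2‖]
  have hc2 := normOneSq_nonneg c
  calc normOneSq (TAinv t c)
      ≤ 4 * ‖c 2‖ ^ 2 + (8 * ∑' n, ‖c (n + 3) - c (n + 2)‖ ^ 2 + 32 * ρ ^ 2 * ∑' n, w n ^ 2) := by
        refine add_le_add h2 ?_
        rw [← tsum_mul_left, ← tsum_mul_left, ← hc.mul_left 8 |>.tsum_add (hw.mul_left _)]
        exact (hmajorant.of_nonneg_of_le (fun _ ↦ sq_nonneg _) hΔ).tsum_le_tsum hΔ hmajorant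
    _ ≤ 8 * normOneSq c + 32 * ρ ^ 2 * (4 * normOneSq c) := by
        have hN : normOneSq c = ‖c 2‖ ^ 2 + ∑' n, ‖c (n + 3) - c (n + 2)‖ ^ 2 := rfl
        nlinarith [mul_le_mul_of_nonneg_left hwc (by positivity : 0 ≤ 32 * ρ ^ 2)]
    _ ≤ (12 * ρ) ^ 2 * normOneSq c := by
        nlinarith [mul_le_mul_of_nonneg_right (one_le_pow₀ hρ : 1 ≤ ρ ^ 2) hc2]

/-- Upper bound: there is `M₀ > 0` with `‖T(t)A⁻¹ x‖₁ ≤ M₀ (t / log t) ‖x‖₁` for all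
`t > e` and all `x` of finite `‖·‖₁`-norm. -/
theorem TAinv_norm_upper :
    ∃ M₀ : ℝ, 0 < M₀ ∧ ∀ t : ℝ, Real.exp 1 < t → ∀ c : ℕ → ℂ,
      Summable (fun n : ℕ => ‖c (n + 3) - c (n + 2)‖ ^ 2) →
      Real.sqrt (normOneSq (TAinv t c)) ≤
        M₀ * (t / Real.log t) * Real.sqrt (normOneSq c) := by
  refine ⟨12, by norm_num, fun t ht c hc ↦ ?_⟩
  have hρ : 0 ≤ 12 * (t / Real.log t) := by
    linarith [one_le_div_log ((Real.one_lt_exp_iff.2 one_pos).trans ht)]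
  calc Real.sqrt (normOneSq (TAinv t c))
      ≤ Real.sqrt ((12 * (t / Real.log t)) ^ 2 * normOneSq c) :=
        Real.sqrt_le_sqrt (normOneSq_TAinv_le ht hc)
    _ = 12 * (t / Real.log t) * Real.sqrt (normOneSq c) := by
        rw [Real.sqrt_mul (sq_nonneg _), Real.sqrt_sq hρ]
end

section
/- With the same setup (λ_n = i log n, modified norm ‖·‖₁), there exists m₀ > 0 such that ‖T(t)A^{-1}‖ ≥ m₀ t/log t for all t > e. A witness is the sequence x^{(t)} with c_n^{(t)} = n for n ≤ 2t, c_n^{(t)} = 4t − n for 2t < n ≤ 4t, and 0 otherwise, which satisfies ‖x^{(t)}‖₁² ≤ 4t and ∑_{n≥2} |c^{(t)}_{n+1} (e^{it log n} − e^{it log(n+1)})/log(n+1)|² ≥ m₁² (t/log t)² · 4t for suitable m₁ > 0. -/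
open Complex

/-! For `t ≤ m` and `m + 1 ≤ 2t` the phase step `t (log (m + 1) - log m)` lies in `[1/2, 1]`, so
the entries `m e^{it log m} / (i log m)` of `T(t)A⁻¹` applied to `c_n = n` have consecutive
differences of size at least `t / (8 log t)`: the rotation contributes `≍ m / log m`, while the
variation of `m / log m` costs only `1 / log (m + 1)`. The tent `min n (2K - n)`, `K = ⌈2t⌉`,
agrees with `n` on `[t, 2t]` and has increments of size at most one, so `‖x‖₁² ≤ 7t` while
`‖T(t)A⁻¹ x‖₁²` collects at least `t / 4` such differences. -/

lemma norm_mul_norm_sub_sub_le_norm_smul_sub_smul {𝕜 E : Type*} [NormedField 𝕜]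
    [SeminormedAddCommGroup E] [NormedSpace 𝕜 E] (a b : 𝕜) (u v : E) :
    ‖a‖ * ‖u - v‖ - ‖a - b‖ * ‖v‖ ≤ ‖a • u - b • v‖ := by
  have h : a • u - b • v = a • (u - v) + (a - b) • v := by
    rw [smul_sub, sub_smul]; abel
  rw [h, ← norm_smul, ← norm_smul]
  exact sub_le_iff_le_add.2 (norm_le_add_norm_add _ _)

lemma inv_add_one_le_log_add_one_sub_log {x : ℝ} (hx : 0 < x) :
    (x + 1)⁻¹ ≤ Real.log (x + 1) - Real.log x := by
  have h := Real.one_sub_inv_le_log_of_pos (x := (x + 1) / x) (by positivity)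
  rw [Real.log_div (by positivity) hx.ne', inv_div] at h
  have : 1 - x / (x + 1) = (x + 1)⁻¹ := by field_simp; ring
  linarith

lemma log_add_one_sub_log_le_inv {x : ℝ} (hx : 0 < x) :
    Real.log (x + 1) - Real.log x ≤ x⁻¹ := by
  have h := Real.log_le_sub_one_of_pos (x := (x + 1) / x) (by positivity)
  rw [Real.log_div (by positivity) hx.ne'] at h
  have : (x + 1) / x - 1 = x⁻¹ := by field_simp; ring
  linarith

lemma abs_div_log_add_one_sub_div_log_le {x : ℝ} (hx : 0 < x) (hlog : 1 ≤ Real.log x) :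
    |(x + 1) / Real.log (x + 1) - x / Real.log x| ≤ (Real.log (x + 1))⁻¹ := by
  set L := Real.log x
  set L' := Real.log (x + 1)
  have hLL' : L < L' := Real.log_lt_log hx (by linarith)
  have hL : 0 < L := by linarith
  have hL' : 0 < L' := by linarith
  have hgap : x * (L' - L) ≤ 1 := by
    have := mul_le_mul_of_nonneg_left (log_add_one_sub_log_le_inv hx) hx.le
    rwa [mul_inv_cancel₀ hx.ne'] at this
  have hgap₀ : 0 ≤ x * (L' - L) := mul_nonneg hx.le (by linarith)
  have heq : (x + 1) / L' - x / L = (L - x * (L' - L)) / (L * L') := by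
    field_simp; ring
  rw [heq, abs_div, abs_of_nonneg (by linarith), abs_of_pos (by positivity),
    div_le_iff₀ (by positivity), inv_mul_eq_div, mul_div_cancel_right₀ _ hL'.ne']
  linarith

lemma norm_exp_I_mul_ofReal_sub_one_ge {φ : ℝ} (h₁ : 1 / 2 ≤ φ) (h₂ : φ ≤ 1) :
    15 / 32 ≤ ‖exp (I * φ) - 1‖ := by
  rw [norm_exp_I_mul_ofReal_sub_one, Real.norm_eq_abs]
  have := Real.sin_gt_sub_cube (x := φ / 2) (by linarith)
  have hcube : (φ / 2) ^ 3 ≤ φ / 2 * (1 / 4) := by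
    rw [pow_succ']
    exact mul_le_mul_of_nonneg_left (by nlinarith) (by linarith)
  refine le_trans ?_ (le_abs_self _)
  linarith

lemma mul_sqrt_le_sqrt_of_sq_mul_le {k a b : ℝ} (hk : 0 ≤ k) (h : k ^ 2 * a ≤ b) :
    k * √a ≤ √b := by
  rw [← Real.sqrt_sq hk, ← Real.sqrt_mul (sq_nonneg k)]
  exact Real.sqrt_le_sqrt h

lemma TAinv_natCast_apply (t : ℝ) (n : ℕ) :
    TAinv t (fun k => (k : ℂ)) n =
      -I * ((n / Real.log n : ℝ) • exp (I * ↑(t * Real.log n))) := by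
  rw [TAinv, Complex.real_smul, div_mul_eq_div_div_swap, div_I]
  push_cast
  ring_nf

lemma norm_exp_I_mul_ofReal_sub_exp_I_mul_ofReal_ge {x y : ℝ} (h₁ : 1 / 2 ≤ x - y)
    (h₂ : x - y ≤ 1) : 15 / 32 ≤ ‖exp (I * x) - exp (I * y)‖ := by
  have h : exp (I * x) - exp (I * y) = exp (I * y) * (exp (I * ↑(x - y)) - 1) := by
    rw [mul_sub, mul_one, ← Complex.exp_add]; push_cast; ring_nf
  rw [h, norm_mul, norm_exp_I_mul_ofReal, one_mul]
  exact norm_exp_I_mul_ofReal_sub_one_ge h₁ h₂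

lemma div_log_le_norm_TAinv_natCast_succ_sub {t : ℝ} {m : ℕ} (ht : Real.exp 1 < t)
    (htm : t ≤ m) (hmt : (m : ℝ) + 1 ≤ 2 * t) :
    t / (8 * Real.log t) ≤
      ‖TAinv t (fun k => (k : ℂ)) (m + 1) - TAinv t (fun k => (k : ℂ)) m‖ := by
  have ht₀ : 0 < t := (Real.exp_pos 1).trans ht
  have hlogt : 1 < Real.log t := by rwa [Real.lt_log_iff_exp_lt ht₀]
  have hm : 0 < (m : ℝ) := ht₀.trans_le htm
  have hlogm : 1 ≤ Real.log m := hlogt.le.trans (Real.log_le_log ht₀ htm)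
  have hratio := abs_div_log_add_one_sub_div_log_le hm hlogm
  set L := Real.log m
  set L' := Real.log (m + 1)
  have hL' : 0 < L' := by linarith [Real.log_lt_log hm (lt_add_one (m : ℝ))]
  have hL't : L' ≤ 2 * Real.log t := by
    have := Real.log_le_log (by positivity) hmt
    rw [Real.log_mul two_ne_zero ht₀.ne'] at this
    linarith [Real.log_two_lt_d9]
  have hφ₁ : 1 / 2 ≤ t * L' - t * L := by
    have := mul_le_mul_of_nonneg_left (inv_add_one_le_log_add_one_sub_log hm) ht₀.le
    have : 1 / 2 ≤ t * ((m : ℝ) + 1)⁻¹ := by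
      rw [← div_eq_mul_inv, le_div_iff₀ (by positivity)]; linarith
    linarith
  have hφ₂ : t * L' - t * L ≤ 1 := by
    have := mul_le_mul_of_nonneg_left (log_add_one_sub_log_le_inv hm) ht₀.le
    have : t * (m : ℝ)⁻¹ ≤ 1 := by rwa [← div_eq_mul_inv, div_le_one hm]
    linarith
  have hkey := norm_mul_norm_sub_sub_le_norm_smul_sub_smul ((m + 1) / L') (m / L)
    (exp (I * ↑(t * L'))) (exp (I * ↑(t * L)))
  rw [norm_exp_I_mul_ofReal, mul_one, Real.norm_eq_abs, Real.norm_eq_abs,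
    abs_of_pos (by positivity)] at hkey
  have hdiff := norm_exp_I_mul_ofReal_sub_exp_I_mul_ofReal_ge hφ₁ hφ₂
  calc t / (8 * Real.log t) = t / 4 / (2 * Real.log t) := by ring
    _ ≤ ((m + 1) * (15 / 32) - 1) / L' :=
      div_le_div₀ (by linarith [Real.exp_one_gt_d9]) (by linarith [Real.exp_one_gt_d9]) hL' hL't
    _ ≤ (m + 1) / L' * ‖exp (I * ↑(t * L')) - exp (I * ↑(t * L))‖
          - |(m + 1) / L' - m / L| := by
      have := mul_le_mul_of_nonneg_left hdiff (by positivity : 0 ≤ ((m : ℝ) + 1) / L')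
      rw [sub_div, mul_div_right_comm, one_div]
      linarith
    _ ≤ _ := hkey
    _ = _ := by
      rw [TAinv_natCast_apply, TAinv_natCast_apply, ← mul_sub, norm_mul, norm_neg, norm_I,
        one_mul, Nat.cast_add_one]

lemma sq_norm_two_le_normOneSq (c : ℕ → ℂ) : ‖c 2‖ ^ 2 ≤ normOneSq c :=
  le_add_of_nonneg_right (tsum_nonneg fun _ => by positivity)

section FiniteSupport

variable {c : ℕ → ℂ} {N : ℕ}

lemma sq_norm_sub_eq_zero_of_eq_zero (hc : ∀ n, N ≤ n → c n = 0) {n : ℕ}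
    (hn : n ∉ Finset.range N) :
    ‖c (n + 3) - c (n + 2)‖ ^ 2 = 0 := by
  rw [Finset.mem_range, not_lt] at hn
  rw [hc (n + 3) (by omega), hc (n + 2) (by omega)]
  simp

lemma summable_sq_norm_sub_of_eq_zero (hc : ∀ n, N ≤ n → c n = 0) :
    Summable fun n => ‖c (n + 3) - c (n + 2)‖ ^ 2 :=
  summable_of_ne_finset_zero fun _ hn => sq_norm_sub_eq_zero_of_eq_zero hc hn

lemma normOneSq_eq_of_eq_zero (hc : ∀ n, N ≤ n → c n = 0) :
    normOneSq c = ‖c 2‖ ^ 2 + ∑ n ∈ Finset.range N, ‖c (n + 3) - c (n + 2)‖ ^ 2 := by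
  rw [normOneSq, tsum_eq_sum fun _ hn => sq_norm_sub_eq_zero_of_eq_zero hc hn]

lemma sum_le_normOneSq_of_eq_zero (hc : ∀ n, N ≤ n → c n = 0) (S : Finset ℕ) :
    ∑ n ∈ S, ‖c (n + 3) - c (n + 2)‖ ^ 2 ≤ normOneSq c :=
  (Summable.sum_le_tsum S (fun _ _ => by positivity) (summable_sq_norm_sub_of_eq_zero hc)).trans
    (le_add_of_nonneg_left (by positivity))

end FiniteSupport

lemma TAinv_apply_eq_zero {t : ℝ} {c : ℕ → ℂ} {n : ℕ} (h : c n = 0) :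
    TAinv t c n = 0 := by
  simp [TAinv, h]

-- Truncated subtraction makes the tent vanish for `n ≥ 2K`.
def tent (K n : ℕ) : ℂ := (min n (2 * K - n) : ℕ)

lemma tent_of_le {K n : ℕ} (h : n ≤ K) : tent K n = n := by
  rw [tent, min_eq_left (by omega)]

lemma tent_of_two_mul_le {K n : ℕ} (h : 2 * K ≤ n) : tent K n = 0 := by
  rw [tent, Nat.sub_eq_zero_of_le h, min_zero, Nat.cast_zero]

lemma norm_tent_succ_sub_le (K n : ℕ) : ‖tent K (n + 1) - tent K n‖ ≤ 1 := by
  have h : |((min (n + 1) (2 * K - (n + 1)) : ℕ) : ℤ) - (min n (2 * K - n) : ℕ)| ≤ 1 := by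
    rw [abs_le]; omega
  rw [tent, tent, ← Int.cast_natCast, ← Int.cast_natCast (min n _), ← Int.cast_sub,
    Complex.norm_intCast]
  exact_mod_cast h

lemma normOneSq_tent_le {K : ℕ} (hK : 2 ≤ K) :
    normOneSq (tent K) ≤ 2 * K + 4 := by
  rw [normOneSq_eq_of_eq_zero fun _ => tent_of_two_mul_le, tent_of_le hK]
  have hsum : ∑ n ∈ Finset.range (2 * K), ‖tent K (n + 3) - tent K (n + 2)‖ ^ 2 ≤
      ∑ n ∈ Finset.range (2 * K), (1 : ℝ) :=
    Finset.sum_le_sum fun n _ => pow_le_one₀ (norm_nonneg _) (norm_tent_succ_sub_le K (n + 2))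
  have h₂ : ‖((2 : ℕ) : ℂ)‖ ^ 2 = 4 := by norm_num
  simp only [Finset.sum_const, Finset.card_range, nsmul_eq_mul, mul_one, Nat.cast_mul,
    Nat.cast_ofNat] at hsum
  linarith

lemma TAinv_tent_of_le {t : ℝ} {K n : ℕ} (h : n ≤ K) :
    TAinv t (tent K) n = TAinv t (fun k => (k : ℂ)) n := by
  rw [TAinv, TAinv, tent_of_le h]

lemma normOneSq_TAinv_tent_ge {t : ℝ} (ht : Real.exp 1 < t) :
    t / 4 * (t / (8 * Real.log t)) ^ 2 ≤
      normOneSq (TAinv t (tent ⌈2 * t⌉₊)) := by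
  set K := ⌈2 * t⌉₊
  set a := ⌈t⌉₊
  set b := ⌊2 * t⌋₊
  have ht₀ : 0 < t := (Real.exp_pos 1).trans ht
  have hta : t ≤ a := Nat.le_ceil t
  have hat : (a : ℝ) < t + 1 := Nat.ceil_lt_add_one ht₀.le
  have hbt : (b : ℝ) ≤ 2 * t := Nat.floor_le (by positivity)
  have htb : 2 * t < b + 1 := Nat.lt_floor_add_one _
  have hbK : b ≤ K := Nat.floor_le_ceil _
  have hlogt : 0 < Real.log t := Real.log_pos (by linarith [Real.exp_one_gt_d9])
  have ha : 3 ≤ a := by exact_mod_cast (by linarith [Real.exp_one_gt_d9] : (2 : ℝ) < a)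
  have hab : t / 4 ≤ ((b - a : ℕ) : ℝ) := by
    rw [Nat.cast_sub (by exact_mod_cast (by linarith [Real.exp_one_gt_d9] : (a : ℝ) ≤ b))]
    linarith [Real.exp_one_gt_d9]
  have hterm : ∀ n ∈ Finset.Ico (a - 2) (b - 2), (t / (8 * Real.log t)) ^ 2 ≤
      ‖TAinv t (tent K) (n + 3) - TAinv t (tent K) (n + 2)‖ ^ 2 := by
    intro n hn
    rw [Finset.mem_Ico] at hn
    rw [TAinv_tent_of_le (by omega), TAinv_tent_of_le (by omega)]
    have hnb : ((n + 2 : ℕ) : ℝ) + 1 ≤ b := by exact_mod_cast (by omega : n + 2 + 1 ≤ b)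
    have hlow := div_log_le_norm_TAinv_natCast_succ_sub ht
      (hta.trans (by exact_mod_cast (by omega : a ≤ n + 2))) (hnb.trans hbt)
    exact pow_le_pow_left₀ (by positivity) hlow 2
  calc t / 4 * (t / (8 * Real.log t)) ^ 2
      ≤ (Finset.Ico (a - 2) (b - 2)).card * (t / (8 * Real.log t)) ^ 2 := by
        rw [Nat.card_Ico, show b - 2 - (a - 2) = b - a by omega]
        gcongr
    _ ≤ _ := by
        rw [← nsmul_eq_mul]
        exact Finset.card_nsmul_le_sum _ _ _ hterm
    _ ≤ _ := sum_le_normOneSq_of_eq_zero (c := TAinv t (tent K))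
        (fun n hn => TAinv_apply_eq_zero (tent_of_two_mul_le hn)) _

/-- Lower bound: there is `m₀ > 0` such that for every `t > e` there is a nonzero witness
sequence `x^{(t)}` (one may take `c_n = n` for `n ≤ 2t`, `c_n = 4t - n` for `2t < n ≤ 4t`,
`c_n = 0` otherwise) with `‖T(t)A⁻¹ x^{(t)}‖₁ ≥ m₀ (t / log t) ‖x^{(t)}‖₁`; hence
`‖T(t)A⁻¹‖ ≥ m₀ t / log t` for all `t > e`. -/
theorem TAinv_norm_lower :
    ∃ m₀ : ℝ, 0 < m₀ ∧ ∀ t : ℝ, Real.exp 1 < t → ∃ c : ℕ → ℂ,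
      Summable (fun n : ℕ => ‖c (n + 3) - c (n + 2)‖ ^ 2) ∧
      0 < Real.sqrt (normOneSq c) ∧
      m₀ * (t / Real.log t) * Real.sqrt (normOneSq c) ≤
        Real.sqrt (normOneSq (TAinv t c)) := by
  refine ⟨1 / 64, by norm_num, fun t ht => ?_⟩
  have ht₃ : 2 < t := by linarith [Real.exp_one_gt_d9]
  have hlogt : 0 < Real.log t := Real.log_pos (by linarith)
  set K := ⌈2 * t⌉₊
  have hK : (K : ℝ) < 2 * t + 1 := Nat.ceil_lt_add_one (by positivity)
  have hK₂ : 2 ≤ K := by exact_mod_cast (by linarith [Nat.le_ceil (2 * t)] : (2 : ℝ) ≤ K)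
  have hc₂ : ‖tent K 2‖ ^ 2 = 4 := by rw [tent_of_le hK₂]; norm_num
  refine ⟨tent K, summable_sq_norm_sub_of_eq_zero fun _ => tent_of_two_mul_le,
    Real.sqrt_pos.2 (by linarith [sq_norm_two_le_normOneSq (tent K)]), ?_⟩
  refine mul_sqrt_le_sqrt_of_sq_mul_le (by positivity) ?_
  calc (1 / 64 * (t / Real.log t)) ^ 2 * normOneSq (tent K)
      ≤ (1 / 64 * (t / Real.log t)) ^ 2 * (7 * t) := by
        gcongr
        linarith [normOneSq_tent_le hK₂]
    _ ≤ t / 4 * (t / (8 * Real.log t)) ^ 2 := by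
        rw [div_mul_eq_div_div_swap]
        have : 0 ≤ t * (t / Real.log t) ^ 2 := by positivity
        linarith
    _ ≤ _ := normOneSq_TAinv_tent_ge ht
end
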